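/- arXiv:1409.2587 — 7 statements merged into one kernel-verified Lean document; each statement's English description precedes it below -/
import Mathlib

section
/- Let n ≥ 2, let P, Q : (0,∞) × ℝ → ℝ be differentiable in their second variable, and let σ : (0,∞) → (0,∞) be differentiable. For x, y ∈ ℝⁿ with x ≠ 0 and y ≠ 0, write u = |y|, r = |x|, s = ⟨x,y⟩/|y|, and define G^i(x,y) = u·P(r,s)·y^i + u²·Q(r,s)·x^i for i = 1,…,n. Then for all such x, y one has Σ_{m=1}^n ∂G^m/∂y^m(x,y) − Σ_{m=1}^n y^m · ∂/∂x^m[ln σ(|x|)] = (n+1)·u·P(r,s) + u·(r² − s²)·Q_s(r,s) + 2·u·s·Q(r,s) + u·f(r)·s, where Q_s denotes the partial derivative of Q in its second variable and f(r) = −σ'(r)/(r·σ(r)). -/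
open scoped RealInnerProductSpace
open Finset

/-!
Along a direction `v`, the chain rule through `u' = ⟪y, v⟫ / u` and
`s' = (⟪x, v⟫ - s ⟪y, v⟫ / u) / u` writes the derivative of the `w`-component of the spray as a
combination of `⟪y, v⟫⟪w, y⟫`, `⟪x, v⟫⟪w, y⟫`, `⟪v, w⟫`, `⟪y, v⟫⟪w, x⟫` and `⟪x, v⟫⟪w, x⟫`.
Taking `v = w = b i` and summing over an orthonormal basis, Parseval turns these into
`u²`, `s u`, `n`, `s u` and `r²`. Likewise `∑ y^m ∂_m ln σ(|x|) = σ'(r) / σ(r) · ⟪x, y⟫ / r`.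
-/

section LineDerivatives

variable {E : Type*} [NormedAddCommGroup E] [InnerProductSpace ℝ E]

theorem hasDerivAt_add_smul (y v : E) : HasDerivAt (fun t : ℝ => y + t • v) v 0 := by
  simpa using ((hasDerivAt_id (0 : ℝ)).smul_const v).const_add y

theorem hasDerivAt_norm_add_smul {y : E} (hy : y ≠ 0) (v : E) :
    HasDerivAt (fun t : ℝ => ‖y + t • v‖) (⟪y, v⟫ / ‖y‖) 0 := by
  have hsqrt := (hasDerivAt_add_smul y v).norm_sq.sqrt (by simpa using hy)
  simp only [Real.sqrt_sq (norm_nonneg _), zero_smul, add_zero] at hsqrt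
  convert hsqrt using 1
  field_simp

theorem hasDerivAt_inner_add_smul (x y v : E) :
    HasDerivAt (fun t : ℝ => ⟪x, y + t • v⟫) ⟪x, v⟫ 0 := by
  simpa using (hasDerivAt_const (0 : ℝ) x).inner ℝ (hasDerivAt_add_smul y v)

theorem hasDerivAt_inner_div_norm_add_smul (x : E) {y : E} (hy : y ≠ 0) (v : E) :
    HasDerivAt (fun t : ℝ => ⟪x, y + t • v⟫ / ‖y + t • v‖)
      ((⟪x, v⟫ - ⟪x, y⟫ / ‖y‖ * (⟪y, v⟫ / ‖y‖)) / ‖y‖) 0 := by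
  have hu : ‖y‖ ≠ 0 := norm_ne_zero_iff.mpr hy
  refine ((hasDerivAt_inner_add_smul x y v).div (hasDerivAt_norm_add_smul hy v)
    (by simpa)).congr_deriv ?_
  simp only [zero_smul, add_zero]
  field_simp

/-- The component along `w` of the spray `u p(s) y + u² q(s) x`; the paper's `G^m` is the case
`p = P ‖x‖`, `q = Q ‖x‖`, `w = e_m`. -/
noncomputable def sphericalSprayCoeff (p q : ℝ → ℝ) (x w y : E) : ℝ :=
  ‖y‖ * p (⟪x, y⟫ / ‖y‖) * ⟪w, y⟫ + ‖y‖ ^ 2 * q (⟪x, y⟫ / ‖y‖) * ⟪w, x⟫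

theorem hasDerivAt_sphericalSprayCoeff (p q : ℝ → ℝ) (x : E) {y : E} (hy : y ≠ 0) (v w : E)
    (hp : DifferentiableAt ℝ p (⟪x, y⟫ / ‖y‖)) (hq : DifferentiableAt ℝ q (⟪x, y⟫ / ‖y‖)) :
    HasDerivAt (fun t : ℝ => sphericalSprayCoeff p q x w (y + t • v))
      ((p (⟪x, y⟫ / ‖y‖) - ⟪x, y⟫ / ‖y‖ * deriv p (⟪x, y⟫ / ‖y‖)) / ‖y‖ * (⟪y, v⟫ * ⟪w, y⟫)
        + deriv p (⟪x, y⟫ / ‖y‖) * (⟪x, v⟫ * ⟪w, y⟫)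
        + ‖y‖ * p (⟪x, y⟫ / ‖y‖) * ⟪v, w⟫
        + (2 * q (⟪x, y⟫ / ‖y‖) - ⟪x, y⟫ / ‖y‖ * deriv q (⟪x, y⟫ / ‖y‖)) * (⟪y, v⟫ * ⟪w, x⟫)
        + ‖y‖ * deriv q (⟪x, y⟫ / ‖y‖) * (⟪x, v⟫ * ⟪w, x⟫)) 0 := by
  have hu : ‖y‖ ≠ 0 := norm_ne_zero_iff.mpr hy
  have hnorm := hasDerivAt_norm_add_smul hy v
  have hs := hasDerivAt_inner_div_norm_add_smul x hy v
  have hps : HasDerivAt (fun t : ℝ => p (⟪x, y + t • v⟫ / ‖y + t • v‖)) _ 0 :=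
    HasDerivAt.comp_of_eq 0 hp.hasDerivAt hs (by simp)
  have hqs : HasDerivAt (fun t : ℝ => q (⟪x, y + t • v⟫ / ‖y + t • v‖)) _ 0 :=
    HasDerivAt.comp_of_eq 0 hq.hasDerivAt hs (by simp)
  have hwy : HasDerivAt (fun t : ℝ => ⟪w, y + t • v⟫) ⟪w, v⟫ 0 := hasDerivAt_inner_add_smul w y v
  refine (((hnorm.mul hps).mul hwy).add (((hnorm.pow 2).mul hqs).mul_const ⟪w, x⟫)).congr_deriv ?_
  simp only [Pi.mul_apply, Pi.pow_apply, zero_smul, add_zero, real_inner_comm w v]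
  field_simp
  ring

theorem hasDerivAt_log_comp_norm_add_smul {σ : ℝ → ℝ} {x : E} (hx : x ≠ 0) (v : E)
    (hσ : DifferentiableAt ℝ σ ‖x‖) (hσx : σ ‖x‖ ≠ 0) :
    HasDerivAt (fun t : ℝ => Real.log (σ ‖x + t • v‖))
      (deriv σ ‖x‖ / σ ‖x‖ * (⟪x, v⟫ / ‖x‖)) 0 := by
  have hσt : HasDerivAt (fun t : ℝ => σ ‖x + t • v‖) (deriv σ ‖x‖ * (⟪x, v⟫ / ‖x‖)) 0 :=
    HasDerivAt.comp_of_eq 0 hσ.hasDerivAt (hasDerivAt_norm_add_smul hx v) (by simp)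
  refine (hσt.log (by simpa using hσx)).congr_deriv ?_
  simp only [zero_smul, add_zero]
  ring

end LineDerivatives

section OrthonormalBasis

variable {ι E : Type*} [Fintype ι] [NormedAddCommGroup E] [InnerProductSpace ℝ E]
  (b : OrthonormalBasis ι ℝ E)

theorem OrthonormalBasis.sum_deriv_sphericalSprayCoeff (p q : ℝ → ℝ) (x : E) {y : E}
    (hy : y ≠ 0) (hp : DifferentiableAt ℝ p (⟪x, y⟫ / ‖y‖))
    (hq : DifferentiableAt ℝ q (⟪x, y⟫ / ‖y‖)) :
    ∑ i, deriv (fun t : ℝ => sphericalSprayCoeff p q x (b i) (y + t • b i)) 0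
      = (Fintype.card ι + 1) * ‖y‖ * p (⟪x, y⟫ / ‖y‖)
        + ‖y‖ * (‖x‖ ^ 2 - (⟪x, y⟫ / ‖y‖) ^ 2) * deriv q (⟪x, y⟫ / ‖y‖)
        + 2 * ‖y‖ * (⟪x, y⟫ / ‖y‖) * q (⟪x, y⟫ / ‖y‖) := by
  have hu : ‖y‖ ≠ 0 := norm_ne_zero_iff.mpr hy
  have hbb (i : ι) : ⟪b i, b i⟫ = 1 := by simp [b.orthonormal.1 i]
  simp only [fun i => (hasDerivAt_sphericalSprayCoeff p q x hy (b i) (b i) hp hq).deriv,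
    sum_add_distrib, ← mul_sum, b.sum_inner_mul_inner, hbb, sum_const, card_univ, nsmul_eq_mul,
    mul_one, real_inner_self_eq_norm_sq, real_inner_comm y x]
  field_simp
  ring

theorem OrthonormalBasis.sum_inner_mul_deriv_log_comp_norm {σ : ℝ → ℝ} {x : E} (hx : x ≠ 0)
    (hσ : DifferentiableAt ℝ σ ‖x‖) (hσx : σ ‖x‖ ≠ 0) (y : E) :
    ∑ i, ⟪b i, y⟫ * deriv (fun t : ℝ => Real.log (σ ‖x + t • b i‖)) 0
      = deriv σ ‖x‖ / (‖x‖ * σ ‖x‖) * ⟪x, y⟫ := by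
  simp only [fun i => (hasDerivAt_log_comp_norm_add_smul hx (b i) hσ hσx).deriv]
  rw [← b.sum_inner_mul_inner x y, mul_sum]
  refine sum_congr rfl fun i _ => ?_
  field_simp

end OrthonormalBasis

theorem spherically_symmetric_S_curvature_general
    (n : ℕ)
    (P Q : ℝ → ℝ → ℝ) (σ : ℝ → ℝ)
    (hP : ∀ r > (0:ℝ), Differentiable ℝ (P r))
    (hQ : ∀ r > (0:ℝ), Differentiable ℝ (Q r))
    (hσpos : ∀ r > (0:ℝ), 0 < σ r)
    (hσdiff : ∀ r > (0:ℝ), DifferentiableAt ℝ σ r)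
    (x y : EuclideanSpace ℝ (Fin n)) (hx : x ≠ 0) (hy : y ≠ 0) :
    let u : ℝ := ‖y‖
    let r : ℝ := ‖x‖
    let s : ℝ := ⟪x, y⟫ / ‖y‖
    let G : Fin n → EuclideanSpace ℝ (Fin n) → EuclideanSpace ℝ (Fin n) → ℝ :=
      fun i x y => ‖y‖ * P ‖x‖ (⟪x, y⟫ / ‖y‖) * y i
        + ‖y‖ ^ 2 * Q ‖x‖ (⟪x, y⟫ / ‖y‖) * x i
    let f : ℝ → ℝ := fun r => -(deriv σ r) / (r * σ r)
    (∑ m, deriv (fun t : ℝ => G m x (y + t • EuclideanSpace.single m (1:ℝ))) 0)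
      - (∑ m, y m *
          deriv (fun t : ℝ => Real.log (σ ‖x + t • EuclideanSpace.single m (1:ℝ)‖)) 0)
      = (n + 1) * u * P r s + u * (r ^ 2 - s ^ 2) * deriv (Q r) s
        + 2 * u * s * Q r s + u * f r * s := by
  intro u r s G f
  have hr : 0 < ‖x‖ := norm_pos_iff.mpr hx
  have hspray := (EuclideanSpace.basisFun (Fin n) ℝ).sum_deriv_sphericalSprayCoeff
    (P ‖x‖) (Q ‖x‖) x hy (hP _ hr).differentiableAt (hQ _ hr).differentiableAt
  have hlog := (EuclideanSpace.basisFun (Fin n) ℝ).sum_inner_mul_deriv_log_comp_norm hx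
    (hσdiff _ hr) (hσpos _ hr).ne' y
  simp only [sphericalSprayCoeff, EuclideanSpace.basisFun_apply, EuclideanSpace.inner_single_left,
    map_one, one_mul, Fintype.card_fin] at hspray hlog
  simp only [G]
  rw [hspray, hlog]
  simp only [u, r, s, f]
  field_simp
  ring

/-- Lemma 2.1: the S-curvature of a spherically symmetric Finsler metric with spray
coefficients `G^i = u P y^i + u² Q x^i`, with respect to a spherically symmetric
volume form `σ(|x|)dx`, equals `(n+1)uP + u(r²-s²)Q_s + 2usQ + u f(r) s`. -/
theorem spherically_symmetric_S_curvature
    (n : ℕ) (hn : 2 ≤ n)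
    (P Q : ℝ → ℝ → ℝ) (σ : ℝ → ℝ)
    (hP : ∀ r > (0:ℝ), Differentiable ℝ (P r))
    (hQ : ∀ r > (0:ℝ), Differentiable ℝ (Q r))
    (hσpos : ∀ r > (0:ℝ), 0 < σ r)
    (hσdiff : ∀ r > (0:ℝ), DifferentiableAt ℝ σ r)
    (x y : EuclideanSpace ℝ (Fin n)) (hx : x ≠ 0) (hy : y ≠ 0) :
    let u : ℝ := ‖y‖
    let r : ℝ := ‖x‖
    let s : ℝ := ⟪x, y⟫ / ‖y‖
    let G : Fin n → EuclideanSpace ℝ (Fin n) → EuclideanSpace ℝ (Fin n) → ℝ :=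
      fun i x y => ‖y‖ * P ‖x‖ (⟪x, y⟫ / ‖y‖) * y i
        + ‖y‖ ^ 2 * Q ‖x‖ (⟪x, y⟫ / ‖y‖) * x i
    let f : ℝ → ℝ := fun r => -(deriv σ r) / (r * σ r)
    (∑ m, deriv (fun t : ℝ => G m x (y + t • EuclideanSpace.single m (1:ℝ))) 0)
      - (∑ m, y m *
          deriv (fun t : ℝ => Real.log (σ ‖x + t • EuclideanSpace.single m (1:ℝ)‖)) 0)
      = (n + 1) * u * P r s + u * (r ^ 2 - s ^ 2) * deriv (Q r) s
        + 2 * u * s * Q r s + u * f r * s :=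
  spherically_symmetric_S_curvature_general n P Q σ hP hQ hσpos hσdiff x y hx hy
end

section
/- Let I ⊆ (0,∞) be an open interval, let c₂ : I → ℝ be continuous, and let g, G, E : I → ℝ be differentiable functions with g > 0, E > 0, satisfying g'(r) = (2/r − 4r³c₂(r))·g(r), G'(r) = 4r·c₂(r)·g(r), and E'(r) = −(2/r − 2r³c₂(r))·E(r) for all r ∈ I. Let ψ : ℝ → ℝ be differentiable. Define φ(r,s) = ψ(s²/(g(r) + s²·G(r)))·E(r)·s. Then at every point (r,s) ∈ I × ℝ with g(r) + s²·G(r) ≠ 0, φ satisfies the first-order linear partial differential equation ∂φ/∂r + (s/r − 2r·c₂(r)·(r² − s²)·s)·∂φ/∂s = −(1/r − 2r·c₂(r)·s²)·φ. -/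
/-!
Write `D = g + s² G`, `u = s² / D`, `L = ∂_r + k ∂_s` with `k = s/r − 2 r c₂ (r² − s²) s`.
The ODEs for `g` and `G` give `s D_r = s (2/r − 4r³c₂ + 4 r c₂ s²) g = 2 k g`, while `D_s = 2 s G`;
hence `u_r = −2 s k g / D²` and `u_s = 2 s g / D²`, so `L u = 0`: `u` is a first integral of the
characteristic field. The ODE for `E` gives `L (E s) = −(1/r − 2 r c₂ s²) E s`, and since
`φ = ψ(u) · E s`, the Leibniz rule yields `L φ = ψ'(u) (L u) E s + ψ(u) L (E s)`.
-/

theorem hasDerivAt_sq_div_add_sq_mul (a b s : ℝ) (hD : a + s ^ 2 * b ≠ 0) :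
    HasDerivAt (fun t : ℝ => t ^ 2 / (a + t ^ 2 * b)) (2 * s * a / (a + s ^ 2 * b) ^ 2) s := by
  have hsq : HasDerivAt (fun t : ℝ => t ^ 2) (2 * s) s := by simpa using hasDerivAt_pow 2 s
  exact (hsq.div ((hsq.mul_const b).const_add a) hD).congr_deriv (by ring)

theorem hasDerivAt_comp_sq_div_mul_mul_self {ψ : ℝ → ℝ} (a b e s : ℝ)
    (hψ : DifferentiableAt ℝ ψ (s ^ 2 / (a + s ^ 2 * b))) (hD : a + s ^ 2 * b ≠ 0) :
    HasDerivAt (fun t : ℝ => ψ (t ^ 2 / (a + t ^ 2 * b)) * e * t)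
      (deriv ψ (s ^ 2 / (a + s ^ 2 * b)) * (2 * s * a / (a + s ^ 2 * b) ^ 2) * e * s
        + ψ (s ^ 2 / (a + s ^ 2 * b)) * e) s := by
  have hu := hψ.hasDerivAt.comp s (hasDerivAt_sq_div_add_sq_mul a b s hD)
  exact ((hu.mul_const e).mul (hasDerivAt_id s)).congr_deriv (by simp)

theorem hasDerivAt_comp_div_add_mul_mul {ψ g G E : ℝ → ℝ} {g' G' E' r : ℝ} (s : ℝ)
    (hψ : DifferentiableAt ℝ ψ (s ^ 2 / (g r + s ^ 2 * G r)))
    (hg : HasDerivAt g g' r) (hG : HasDerivAt G G' r) (hE : HasDerivAt E E' r)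
    (hD : g r + s ^ 2 * G r ≠ 0) :
    HasDerivAt (fun t : ℝ => ψ (s ^ 2 / (g t + s ^ 2 * G t)) * E t * s)
      ((deriv ψ (s ^ 2 / (g r + s ^ 2 * G r))
            * (-(s ^ 2 * (g' + s ^ 2 * G')) / (g r + s ^ 2 * G r) ^ 2) * E r
          + ψ (s ^ 2 / (g r + s ^ 2 * G r)) * E') * s) r := by
  have hden : HasDerivAt (fun t => g t + s ^ 2 * G t) (g' + s ^ 2 * G') r :=
    hg.add (hG.const_mul _)
  have hu : HasDerivAt (fun t => s ^ 2 / (g t + s ^ 2 * G t))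
      (-(s ^ 2 * (g' + s ^ 2 * G')) / (g r + s ^ 2 * G r) ^ 2) r :=
    ((hasDerivAt_const r (s ^ 2)).div hden hD).congr_deriv (by ring)
  exact ((hψ.hasDerivAt.comp r hu).mul hE).mul_const s

theorem solution_of_characteristic_pde_general
    (I : Set ℝ)
    (c₂ g G E : ℝ → ℝ) (ψ : ℝ → ℝ)
    (hg : ∀ r ∈ I, HasDerivAt g ((2 / r - 4 * r ^ 3 * c₂ r) * g r) r)
    (hG : ∀ r ∈ I, HasDerivAt G (4 * r * c₂ r * g r) r)
    (hE : ∀ r ∈ I, HasDerivAt E (-(2 / r - 2 * r ^ 3 * c₂ r) * E r) r)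
    (hψ : Differentiable ℝ ψ) :
    ∀ r ∈ I, ∀ s : ℝ, g r + s ^ 2 * G r ≠ 0 →
      deriv (fun t : ℝ => ψ (s ^ 2 / (g t + s ^ 2 * G t)) * E t * s) r
        + (s / r - 2 * r * c₂ r * (r ^ 2 - s ^ 2) * s)
            * deriv (fun t : ℝ => ψ (t ^ 2 / (g r + t ^ 2 * G r)) * E r * t) s
        = -(1 / r - 2 * r * c₂ r * s ^ 2)
            * (ψ (s ^ 2 / (g r + s ^ 2 * G r)) * E r * s) := by
  intro r hr s hD
  set k := s / r - 2 * r * c₂ r * (r ^ 2 - s ^ 2) * s with hk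
  set D := g r + s ^ 2 * G r
  set u := s ^ 2 / D
  rw [(hasDerivAt_comp_div_add_mul_mul s (hψ u) (hg r hr) (hG r hr) (hE r hr) hD).deriv,
    (hasDerivAt_comp_sq_div_mul_mul_self (g r) (G r) (E r) s (hψ u) hD).deriv]
  have transport :
      -(s ^ 2 * ((2 / r - 4 * r ^ 3 * c₂ r) * g r + s ^ 2 * (4 * r * c₂ r * g r))) / D ^ 2
        + k * (2 * s * g r / D ^ 2) = 0 := by
    rw [hk]
    ring
  have weight : -(2 / r - 2 * r ^ 3 * c₂ r) * E r * s + k * E r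
      = -(1 / r - 2 * r * c₂ r * s ^ 2) * (E r * s) := by
    rw [hk]
    ring
  linear_combination (deriv ψ u * E r * s) * transport + ψ u * weight

/-- Lemma 3.3 (verification half): the function
`φ(r,s) = ψ(s²/(g(r) + s² G(r))) · E(r) · s`, where
`g' = (2/r − 4r³c₂) g`, `G' = 4 r c₂ g` and `E' = −(2/r − 2r³c₂) E`,
solves the PDE  `φ_r + (s/r − 2 r c₂ (r²−s²) s) φ_s = −(1/r − 2 r c₂ s²) φ`. -/
theorem solution_of_characteristic_pde
    (I : Set ℝ) (hI_open : IsOpen I) (hI_conn : Convex ℝ I)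
    (hI_pos : I ⊆ Set.Ioi (0:ℝ))
    (c₂ g G E : ℝ → ℝ) (ψ : ℝ → ℝ)
    (hc₂ : ContinuousOn c₂ I)
    (hg_pos : ∀ r ∈ I, 0 < g r) (hE_pos : ∀ r ∈ I, 0 < E r)
    (hg : ∀ r ∈ I, HasDerivAt g ((2 / r - 4 * r ^ 3 * c₂ r) * g r) r)
    (hG : ∀ r ∈ I, HasDerivAt G (4 * r * c₂ r * g r) r)
    (hE : ∀ r ∈ I, HasDerivAt E (-(2 / r - 2 * r ^ 3 * c₂ r) * E r) r)
    (hψ : Differentiable ℝ ψ) :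
    ∀ r ∈ I, ∀ s : ℝ, g r + s ^ 2 * G r ≠ 0 →
      deriv (fun t : ℝ => ψ (s ^ 2 / (g t + s ^ 2 * G t)) * E t * s) r
        + (s / r - 2 * r * c₂ r * (r ^ 2 - s ^ 2) * s)
            * deriv (fun t : ℝ => ψ (t ^ 2 / (g r + t ^ 2 * G r)) * E r * t) s
        = -(1 / r - 2 * r * c₂ r * s ^ 2)
            * (ψ (s ^ 2 / (g r + s ^ 2 * G r)) * E r * s) :=
  solution_of_characteristic_pde_general I c₂ g G E ψ hg hG hE hψ
end

section
/- Let I ⊆ (0,∞) be an open interval, let c₂ : I → ℝ be continuous, and let g, G : I → ℝ be differentiable with g > 0, satisfying g'(r) = (2/r − 4r³c₂(r))·g(r) and G'(r) = 4r·c₂(r)·g(r) for all r ∈ I. Suppose s : I → ℝ is differentiable and satisfies the characteristic ODE s'(r) = s(r)/r − 2r·c₂(r)·(r² − s(r)²)·s(r), and suppose g(r) + s(r)²·G(r) ≠ 0 for all r ∈ I. Then the function r ↦ s(r)²/(g(r) + s(r)²·G(r)) has derivative zero on I, i.e. s²/(g + s²G) is a first integral of the characteristic equation. -/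
/-!
By the quotient rule, `N / D` is stationary wherever `N' D = N D'`. For `N = s²` and
`D = g + s² G` the terms `2 s s' s² G` on both sides cancel, and what remains,
`2 s s' g = s² (g' + s² G')`, is exactly the characteristic equation multiplied by `2 s g`
once `g'` and `G'` are substituted.
-/

theorem HasDerivAt.div_zero_of_mul_eq_mul {𝕜 : Type*} [NontriviallyNormedField 𝕜]
    {N D : 𝕜 → 𝕜} {N' D' x : 𝕜} (hN : HasDerivAt N N' x) (hD : HasDerivAt D D' x)
    (hDx : D x ≠ 0) (hwronskian : N' * D x = N x * D') :
    HasDerivAt (fun t => N t / D t) 0 x := by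
  have h := hN.div hD hDx
  rwa [hwronskian, sub_self, zero_div] at h

theorem first_integral_of_characteristic_ode_general
    (I : Set ℝ)
    (hI_pos : I ⊆ Set.Ioi (0:ℝ))
    (c₂ g G s : ℝ → ℝ)
    (hg : ∀ r ∈ I, HasDerivAt g ((2 / r - 4 * r ^ 3 * c₂ r) * g r) r)
    (hG : ∀ r ∈ I, HasDerivAt G (4 * r * c₂ r * g r) r)
    (hs : ∀ r ∈ I, HasDerivAt s (s r / r - 2 * r * c₂ r * (r ^ 2 - s r ^ 2) * s r) r)
    (hne : ∀ r ∈ I, g r + s r ^ 2 * G r ≠ 0) :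
    ∀ r ∈ I, HasDerivAt (fun t : ℝ => s t ^ 2 / (g t + s t ^ 2 * G t)) 0 r := by
  intro r hr
  have hr0 : r ≠ 0 := (hI_pos hr).ne'
  have hs_sq := (hs r hr).pow 2
  refine hs_sq.div_zero_of_mul_eq_mul ((hg r hr).add (hs_sq.mul (hG r hr))) (hne r hr) ?_
  simp only [Pi.pow_apply]
  push_cast
  field_simp
  ring

/-- Lemma 3.3 (first integral): along a solution `s(r)` of the characteristic ODE
`s' = s/r − 2 r c₂ (r² − s²) s`, the quantity `s²/(g + s² G)` is constant, where
`g' = (2/r − 4r³c₂) g` and `G' = 4 r c₂ g`. -/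
theorem first_integral_of_characteristic_ode
    (I : Set ℝ) (hI_open : IsOpen I) (hI_conn : Convex ℝ I)
    (hI_pos : I ⊆ Set.Ioi (0:ℝ))
    (c₂ g G s : ℝ → ℝ)
    (hc₂ : ContinuousOn c₂ I)
    (hg_pos : ∀ r ∈ I, 0 < g r)
    (hg : ∀ r ∈ I, HasDerivAt g ((2 / r - 4 * r ^ 3 * c₂ r) * g r) r)
    (hG : ∀ r ∈ I, HasDerivAt G (4 * r * c₂ r * g r) r)
    (hs : ∀ r ∈ I, HasDerivAt s (s r / r - 2 * r * c₂ r * (r ^ 2 - s r ^ 2) * s r) r)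
    (hne : ∀ r ∈ I, g r + s r ^ 2 * G r ≠ 0) :
    ∀ r ∈ I, HasDerivAt (fun t : ℝ => s t ^ 2 / (g t + s t ^ 2 * G t)) 0 r :=
  first_integral_of_characteristic_ode_general I hI_pos c₂ g G s hg hG hs hne
end

section
/- Let I ⊆ (0,∞) be an open interval, let c₂ : I → ℝ be continuous, and let E : I → ℝ be differentiable with E > 0 and E'(r) = −(2/r − 2r³c₂(r))·E(r) for all r ∈ I. Suppose s : I → ℝ is differentiable with s'(r) = s(r)/r − 2r·c₂(r)·(r² − s(r)²)·s(r), and p : I → ℝ is differentiable, never zero, and satisfies p'(r) = −(1/r − 2r·c₂(r)·s(r)²)·p(r) for all r ∈ I. Then the function r ↦ s(r)·E(r)/p(r) has derivative zero on I, i.e. it is constant on I. -/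
/-! If `s`, `E`, `p` grow at the logarithmic rates `a`, `b`, `c` with `a + b = c`, then `s E / p`
has logarithmic derivative `a + b - c = 0`. Here `a = 1/r − 2rc₂(r² − s²)`, `b = −2/r + 2r³c₂` and
`c = −1/r + 2rc₂s²`. -/

theorem hasDerivAt_mul_div_zero_of_add_eq {𝕜 : Type*} [NontriviallyNormedField 𝕜]
    {f g h : 𝕜 → 𝕜} {a b c x : 𝕜} (hf : HasDerivAt f (a * f x) x) (hg : HasDerivAt g (b * g x) x)
    (hh : HasDerivAt h (c * h x) x) (hx : h x ≠ 0) (habc : a + b = c) :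
    HasDerivAt (fun t => f t * g t / h t) 0 x := by
  refine ((hf.mul hg).div hh hx).congr_deriv ?_
  subst habc
  simp only [Pi.mul_apply]
  field_simp
  ring

theorem second_first_integral_of_characteristic_ode_general
    (I : Set ℝ)
    (c₂ E s p : ℝ → ℝ)
    (hE : ∀ r ∈ I, HasDerivAt E (-(2 / r - 2 * r ^ 3 * c₂ r) * E r) r)
    (hs : ∀ r ∈ I, HasDerivAt s (s r / r - 2 * r * c₂ r * (r ^ 2 - s r ^ 2) * s r) r)
    (hp_ne : ∀ r ∈ I, p r ≠ 0)
    (hp : ∀ r ∈ I, HasDerivAt p (-(1 / r - 2 * r * c₂ r * s r ^ 2) * p r) r) :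
    ∀ r ∈ I, HasDerivAt (fun t : ℝ => s t * E t / p t) 0 r := by
  intro r hr
  have hs' : HasDerivAt s ((1 / r - 2 * r * c₂ r * (r ^ 2 - s r ^ 2)) * s r) r :=
    (hs r hr).congr_deriv (by ring)
  exact hasDerivAt_mul_div_zero_of_add_eq hs' (hE r hr) (hp r hr) (hp_ne r hr) (by ring)

/-- Lemma 3.3 (second first integral): along a characteristic curve `s(r)` of the PDE,
with `p` playing the role of `φ` along the characteristic
(`p' = −(1/r − 2 r c₂ s²) p`) and `E' = −(2/r − 2r³c₂) E`, `E > 0`,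
the quantity `s·E/p` is constant. -/
theorem second_first_integral_of_characteristic_ode
    (I : Set ℝ) (hI_open : IsOpen I) (hI_conn : Convex ℝ I)
    (hI_pos : I ⊆ Set.Ioi (0:ℝ))
    (c₂ E s p : ℝ → ℝ)
    (hc₂ : ContinuousOn c₂ I)
    (hE_pos : ∀ r ∈ I, 0 < E r)
    (hE : ∀ r ∈ I, HasDerivAt E (-(2 / r - 2 * r ^ 3 * c₂ r) * E r) r)
    (hs : ∀ r ∈ I, HasDerivAt s (s r / r - 2 * r * c₂ r * (r ^ 2 - s r ^ 2) * s r) r)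
    (hp_ne : ∀ r ∈ I, p r ≠ 0)
    (hp : ∀ r ∈ I, HasDerivAt p (-(1 / r - 2 * r * c₂ r * s r ^ 2) * p r) r) :
    ∀ r ∈ I, HasDerivAt (fun t : ℝ => s t * E t / p t) 0 r :=
  second_first_integral_of_characteristic_ode_general I c₂ E s p hE hs hp_ne hp
end

section
/- Let D ⊆ (0,∞) × ℝ be an open set, let φ : D → ℝ be twice continuously differentiable, and let b, c, c₁, c₂ : (0,∞) → ℝ. Suppose that at every (r,s) ∈ D the two equations hold: (i) r·[2(r²−s²)(c₁(r)+c₂(r)s²) − 1]·φ_s − s·φ_r + 2[b(r)·r·s + r·s·(c₁(r)+c₂(r)s²)]·φ + 2r·c(r)·φ² = 0, and (ii) r·[2(r²−s²)(c₁(r)+c₂(r)s²) − 1]·φ_ss − s·φ_rs + φ_r + 2r·(c₁(r)+c₂(r)s²)·(φ − s·φ_s) = 0, where subscripts denote partial derivatives. Then at every (r,s) ∈ D one has r·[2c₁(r)(r²−s²) − 1 − b(r)·s²]·φ_s − 2c(r)·r·s·φ·φ_s + (b(r)+2c₁(r))·r·s·φ + 2c(r)·r·φ² = 0. -/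
/-!
Equation (i) holds on the open set `D`, so its `s`-derivative vanishes there too; this needs
`φ_s` and `φ_r` to be differentiable in `s`, which is where `φ ∈ C²` enters. The second-order
terms `φ_ss` and `φ_rs` of (i)_s coincide with those of (ii), so (i)_s − (ii) involves only
`φ`, `φ_s` and `φ_r`, and adding `-s/2` times it to (i) eliminates `φ_r`.
-/

open Filter Topology

section PartialDerivatives

variable {𝕜 : Type*} [NontriviallyNormedField 𝕜] {F : Type*} [NormedAddCommGroup F]
  [NormedSpace 𝕜 F] {f : 𝕜 × 𝕜 → F} {D : Set (𝕜 × 𝕜)}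

theorem HasFDerivAt.hasDerivAt_slice_fst {f' : 𝕜 × 𝕜 →L[𝕜] F} {a b : 𝕜}
    (hf : HasFDerivAt f f' (a, b)) : HasDerivAt (fun t => f (t, b)) (f' (1, 0)) a :=
  hf.comp_hasDerivAt a ((hasDerivAt_id a).prodMk (hasDerivAt_const a b))

theorem HasFDerivAt.hasDerivAt_slice_snd {f' : 𝕜 × 𝕜 →L[𝕜] F} {a b : 𝕜}
    (hf : HasFDerivAt f f' (a, b)) : HasDerivAt (fun t => f (a, t)) (f' (0, 1)) b :=
  hf.comp_hasDerivAt b ((hasDerivAt_const b a).prodMk (hasDerivAt_id b))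

theorem DifferentiableOn.differentiableAt_slice_snd (hf : DifferentiableOn 𝕜 f D)
    (hD : IsOpen D) {a b : 𝕜} (h : (a, b) ∈ D) : DifferentiableAt 𝕜 (fun t => f (a, t)) b :=
  (hf.differentiableAt (hD.mem_nhds h)).hasFDerivAt.hasDerivAt_slice_snd.differentiableAt

theorem ContDiffOn.deriv_slice_fst {m n : WithTop ℕ∞} (hf : ContDiffOn 𝕜 n f D) (hD : IsOpen D)
    (hmn : m + 1 ≤ n) : ContDiffOn 𝕜 m (fun p : 𝕜 × 𝕜 => deriv (fun t => f (t, p.2)) p.1) D := by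
  refine ((hf.fderiv_of_isOpen hD hmn).clm_apply (contDiffOn_const (c := ((1, 0) : 𝕜 × 𝕜)))).congr
    fun p hp => ?_
  have hfp := (hf.of_le (le_add_self.trans hmn)).differentiableOn_one.differentiableAt
    (hD.mem_nhds hp)
  exact hfp.hasFDerivAt.hasDerivAt_slice_fst.deriv

theorem ContDiffOn.deriv_slice_snd {m n : WithTop ℕ∞} (hf : ContDiffOn 𝕜 n f D) (hD : IsOpen D)
    (hmn : m + 1 ≤ n) : ContDiffOn 𝕜 m (fun p : 𝕜 × 𝕜 => deriv (fun t => f (p.1, t)) p.2) D := by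
  refine ((hf.fderiv_of_isOpen hD hmn).clm_apply (contDiffOn_const (c := ((0, 1) : 𝕜 × 𝕜)))).congr
    fun p hp => ?_
  have hfp := (hf.of_le (le_add_self.trans hmn)).differentiableOn_one.differentiableAt
    (hD.mem_nhds hp)
  exact hfp.hasFDerivAt.hasDerivAt_slice_snd.deriv

theorem HasDerivAt.eq_zero_of_eventually_eq_zero {g : 𝕜 → F} {g' : F} {s : 𝕜}
    (hg : HasDerivAt g g' s) (h0 : ∀ᶠ t in 𝓝 s, g t = 0) : g' = 0 :=
  (hg.congr_of_eventuallyEq (h0.mono fun _ => Eq.symm)).unique (hasDerivAt_const s 0)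

end PartialDerivatives

theorem douglas_isotropic_S_curvature_key_equation_general
    (D : Set (ℝ × ℝ)) (hD_open : IsOpen D)
    (φ : ℝ → ℝ → ℝ) (b c c₁ c₂ : ℝ → ℝ)
    (hφ : ContDiffOn ℝ 2 (fun p : ℝ × ℝ => φ p.1 p.2) D) :
    let φr : ℝ → ℝ → ℝ := fun r s => deriv (fun t : ℝ => φ t s) r
    let φs : ℝ → ℝ → ℝ := fun r s => deriv (fun t : ℝ => φ r t) s
    let φss : ℝ → ℝ → ℝ := fun r s => deriv (fun t : ℝ => φs r t) s
    let φrs : ℝ → ℝ → ℝ := fun r s => deriv (fun t : ℝ => φr r t) s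
    (∀ r s : ℝ, (r, s) ∈ D →
        r * (2 * (r ^ 2 - s ^ 2) * (c₁ r + c₂ r * s ^ 2) - 1) * φs r s
          - s * φr r s
          + 2 * (b r * r * s + r * s * (c₁ r + c₂ r * s ^ 2)) * φ r s
          + 2 * r * c r * (φ r s) ^ 2 = 0) →
    (∀ r s : ℝ, (r, s) ∈ D →
        r * (2 * (r ^ 2 - s ^ 2) * (c₁ r + c₂ r * s ^ 2) - 1) * φss r s
          - s * φrs r s + φr r s
          + 2 * r * (c₁ r + c₂ r * s ^ 2) * (φ r s - s * φs r s) = 0) →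
    ∀ r s : ℝ, (r, s) ∈ D →
      r * (2 * c₁ r * (r ^ 2 - s ^ 2) - 1 - b r * s ^ 2) * φs r s
        - 2 * c r * r * s * φ r s * φs r s
        + (b r + 2 * c₁ r) * r * s * φ r s
        + 2 * c r * r * (φ r s) ^ 2 = 0 := by
  intro φr φs φss φrs h1 h2 r s hrs
  have hslice : ∀ᶠ t in 𝓝 s, (r, t) ∈ D :=
    (continuous_const.prodMk continuous_id).continuousAt.preimage_mem_nhds (hD_open.mem_nhds hrs)
  have hφr_C1 := hφ.deriv_slice_fst hD_open (m := 1) (by norm_num)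
  have hφs_C1 := hφ.deriv_slice_snd hD_open (m := 1) (by norm_num)
  have hφ_s : HasDerivAt (φ r) (φs r s) s :=
    ((hφ.differentiableOn two_ne_zero).differentiableAt_slice_snd hD_open hrs).hasDerivAt
  have hφs_s : HasDerivAt (φs r) (φss r s) s :=
    ((hφs_C1.differentiableOn one_ne_zero).differentiableAt_slice_snd hD_open hrs).hasDerivAt
  have hφr_s : HasDerivAt (φr r) (φrs r s) s :=
    ((hφr_C1.differentiableOn one_ne_zero).differentiableAt_slice_snd hD_open hrs).hasDerivAt
  have ht : HasDerivAt (fun t : ℝ => t) 1 s := hasDerivAt_id s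
  have ht2 : HasDerivAt (fun t : ℝ => t ^ 2) (2 * s) s := by simpa using hasDerivAt_pow 2 s
  have hC : HasDerivAt (fun t => c₁ r + c₂ r * t ^ 2) _ s := (ht2.const_mul (c₂ r)).const_add _
  have hA : HasDerivAt (fun t => r * (2 * (r ^ 2 - t ^ 2) * (c₁ r + c₂ r * t ^ 2) - 1)) _ s :=
    ((((ht2.const_sub _).const_mul 2).mul hC).sub_const 1).const_mul r
  have hB : HasDerivAt (fun t => 2 * (b r * r * t + r * t * (c₁ r + c₂ r * t ^ 2))) _ s :=
    ((ht.const_mul _).add ((ht.const_mul r).mul hC)).const_mul 2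
  have h1_s := ((hA.mul hφs_s).sub (ht.mul hφr_s) |>.add (hB.mul hφ_s)
    |>.add ((hφ_s.pow 2).const_mul (2 * r * c r))).eq_zero_of_eventually_eq_zero
      (hslice.mono fun t ht => h1 r t ht)
  linear_combination h1 r s hrs - s / 2 * (h1_s - h2 r s hrs)

/-- Key computational step in the proof of Theorem 3.2: from the system (3.1),
differentiating the first equation in `s`, subtracting the second, and combining
with the first again yields
`r[2c₁(r²−s²) − 1 − bs²]φ_s − 2crsφφ_s + (b+2c₁)rsφ + 2crφ² = 0`. -/
theorem douglas_isotropic_S_curvature_key_equation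
    (D : Set (ℝ × ℝ)) (hD_open : IsOpen D)
    (hD_sub : D ⊆ Set.Ioi (0:ℝ) ×ˢ (Set.univ : Set ℝ))
    (φ : ℝ → ℝ → ℝ) (b c c₁ c₂ : ℝ → ℝ)
    (hφ : ContDiffOn ℝ 2 (fun p : ℝ × ℝ => φ p.1 p.2) D) :
    let φr : ℝ → ℝ → ℝ := fun r s => deriv (fun t : ℝ => φ t s) r
    let φs : ℝ → ℝ → ℝ := fun r s => deriv (fun t : ℝ => φ r t) s
    let φss : ℝ → ℝ → ℝ := fun r s => deriv (fun t : ℝ => φs r t) s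
    let φrs : ℝ → ℝ → ℝ := fun r s => deriv (fun t : ℝ => φr r t) s
    (∀ r s : ℝ, (r, s) ∈ D →
        r * (2 * (r ^ 2 - s ^ 2) * (c₁ r + c₂ r * s ^ 2) - 1) * φs r s
          - s * φr r s
          + 2 * (b r * r * s + r * s * (c₁ r + c₂ r * s ^ 2)) * φ r s
          + 2 * r * c r * (φ r s) ^ 2 = 0) →
    (∀ r s : ℝ, (r, s) ∈ D →
        r * (2 * (r ^ 2 - s ^ 2) * (c₁ r + c₂ r * s ^ 2) - 1) * φss r s
          - s * φrs r s + φr r s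
          + 2 * r * (c₁ r + c₂ r * s ^ 2) * (φ r s - s * φs r s) = 0) →
    ∀ r s : ℝ, (r, s) ∈ D →
      r * (2 * c₁ r * (r ^ 2 - s ^ 2) - 1 - b r * s ^ 2) * φs r s
        - 2 * c r * r * s * φ r s * φs r s
        + (b r + 2 * c₁ r) * r * s * φ r s
        + 2 * c r * r * (φ r s) ^ 2 = 0 :=
  douglas_isotropic_S_curvature_key_equation_general D hD_open φ b c c₁ c₂ hφ
end

section
/- Let n ≥ 1, let f, g, h : (0,∞) → ℝ be differentiable, and let x ∈ ℝⁿ with x ≠ 0; write r = |x| and assume f(r) ≠ 0 and f(r) + r²·g(r) ≠ 0. Define b_i(x) = h(|x|)·x_i and let Γ^k_{ij} = (1/2)·[ ((fg' − 2f'g)/(rf(f + r²g)))·x_i x_j x_k + ((2rg − f')/(r(f + r²g)))·x_k δ_{ij} + (f'/(rf))·(x_i δ_{kj} + x_j δ_{ki}) ] be the Christoffel symbols of the metric a_{ij} = f(r)δ_{ij} + g(r)x_i x_j. Then the covariant derivative b_{i;j} = ∂b_i/∂x^j − Σ_k b_k·Γ^k_{ij}, evaluated at x, equals (1/2)·(h·(r·f'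 + 2f)/(f + r²g))·δ_{ij} + ( h'/r − (1/2)·h·(r²·g' + 2f')/(r·(f + r²g)) )·x_i·x_j, where f, g, h and their derivatives are evaluated at r. -/
/-!
Along the coordinate line `x + t e_j` the radius has derivative `x_j / r`, so
`∂_j b_i = h' x_i x_j / r + h δ_ij`. In the contraction `Σ_k b_k Γ^k_ij` the only
non-trivial sum is `Σ_k x_k² = r²`; what remains is an identity of rational functions
in `r, f, g, f', g', h, h'`.
-/

open scoped RealInnerProductSpace

section

variable {E : Type*} [NormedAddCommGroup E] [InnerProductSpace ℝ E]

theorem HasDerivAt.norm {γ : ℝ → E} {γ' : E} {t : ℝ} (hγ : HasDerivAt γ γ' t)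
    (h0 : γ t ≠ 0) : HasDerivAt (fun s => ‖γ s‖) (⟪γ t, γ'⟫ / ‖γ t‖) t := by
  have hsqrt := hγ.norm_sq.sqrt (by positivity)
  simp only [Real.sqrt_sq (norm_nonneg _)] at hsqrt
  convert hsqrt using 1
  field_simp [norm_ne_zero_iff.2 h0]

end

namespace EuclideanSpace

variable {ι : Type*} [DecidableEq ι]

theorem hasDerivAt_add_smul_single_apply (x : EuclideanSpace ℝ ι) (i j : ι) :
    HasDerivAt (fun t : ℝ => (x + t • single j (1 : ℝ)) i) (if i = j then 1 else 0) 0 := by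
  simp only [PiLp.add_apply, PiLp.smul_apply, PiLp.single_apply, smul_eq_mul, mul_ite, mul_one,
    mul_zero]
  split_ifs
  · simpa using (hasDerivAt_id (0 : ℝ)).const_add (x i)
  · simpa using hasDerivAt_const (0 : ℝ) (x i)

variable [Fintype ι]

theorem hasDerivAt_norm_add_smul_single {x : EuclideanSpace ℝ ι} (hx : x ≠ 0) (j : ι) :
    HasDerivAt (fun t : ℝ => ‖x + t • single j (1 : ℝ)‖) (x j / ‖x‖) 0 := by
  have hline : HasDerivAt (fun t : ℝ => x + t • single j (1 : ℝ)) (single j 1) 0 := by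
    simpa using ((hasDerivAt_id (0 : ℝ)).smul_const (single j (1 : ℝ))).const_add x
  simpa [inner_single_right] using hline.norm (by simpa using hx)

theorem sum_mul_christoffel_form (x : EuclideanSpace ℝ ι) (A B C : ℝ) (i j : ι) :
    ∑ k, x k * (A * x i * x j * x k + B * x k * (if i = j then 1 else 0)
        + C * (x i * (if k = j then 1 else 0) + x j * (if k = i then 1 else 0)))
      = (A * x i * x j + B * (if i = j then 1 else 0)) * ‖x‖ ^ 2 + 2 * C * x i * x j := by
  have hsplit : ∀ k, x k * (A * x i * x j * x k + B * x k * (if i = j then 1 else 0)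
        + C * (x i * (if k = j then 1 else 0) + x j * (if k = i then 1 else 0)))
      = (A * x i * x j + B * (if i = j then 1 else 0)) * x k ^ 2
        + C * x i * (if k = j then x k else 0) + C * x j * (if k = i then x k else 0) := by
    intro k
    split_ifs <;> ring
  simp only [hsplit, Finset.sum_add_distrib, ← Finset.mul_sum, ← real_norm_sq_eq,
    Finset.sum_ite_eq', Finset.mem_univ, if_true]
  ring

end EuclideanSpace

theorem covariant_derivative_spherical_one_form_general
    (n : ℕ) (f g h : ℝ → ℝ)
    (hhd : ∀ r > (0:ℝ), DifferentiableAt ℝ h r)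
    (x : EuclideanSpace ℝ (Fin n)) (hx : x ≠ 0)
    (hfne : f ‖x‖ ≠ 0) (hfgne : f ‖x‖ + ‖x‖ ^ 2 * g ‖x‖ ≠ 0) :
    let r : ℝ := ‖x‖
    let f' : ℝ := deriv f r
    let g' : ℝ := deriv g r
    let h' : ℝ := deriv h r
    let Γ : Fin n → Fin n → Fin n → ℝ := fun k i j =>
      (1 / 2) *
        ((f r * g' - 2 * f' * g r) / (r * f r * (f r + r ^ 2 * g r)) * x i * x j * x k
          + (2 * r * g r - f') / (r * (f r + r ^ 2 * g r)) * x k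
              * (if i = j then (1:ℝ) else 0)
          + f' / (r * f r) * (x i * (if k = j then (1:ℝ) else 0)
              + x j * (if k = i then (1:ℝ) else 0)))
    ∀ i j : Fin n,
      deriv (fun t : ℝ => h ‖x + t • EuclideanSpace.single j (1:ℝ)‖
          * (x + t • EuclideanSpace.single j (1:ℝ)) i) 0
        - ∑ k, (h r * x k) * Γ k i j
      = (1 / 2) * (h r * (r * f' + 2 * f r) / (f r + r ^ 2 * g r))
            * (if i = j then (1:ℝ) else 0)
        + (h' / r - (1 / 2) * (h r * (r ^ 2 * g' + 2 * f') / (r * (f r + r ^ 2 * g r))))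
            * x i * x j := by
  intro r f' g' h' Γ i j
  have hr : 0 < r := norm_pos_iff.2 hx
  have hh : HasDerivAt (fun t : ℝ => h ‖x + t • EuclideanSpace.single j (1:ℝ)‖)
      (h' * (x j / r)) 0 := by
    have hhr : HasDerivAt h h' ‖x + (0:ℝ) • EuclideanSpace.single j (1:ℝ)‖ := by
      rw [zero_smul, add_zero]
      exact (hhd r hr).hasDerivAt
    exact hhr.comp 0 (EuclideanSpace.hasDerivAt_norm_add_smul_single hx j)
  have hderiv : deriv (fun t : ℝ => h ‖x + t • EuclideanSpace.single j (1:ℝ)‖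
      * (x + t • EuclideanSpace.single j (1:ℝ)) i) 0
      = h' * (x j / r) * x i + h r * (if i = j then 1 else 0) := by
    simpa [r, Pi.mul_def] using (hh.mul (EuclideanSpace.hasDerivAt_add_smul_single_apply x i j)).deriv
  have hsum : ∑ k, (h r * x k) * Γ k i j
      = h r / 2 * ((((f r * g' - 2 * f' * g r) / (r * f r * (f r + r ^ 2 * g r)) * x i * x j
          + (2 * r * g r - f') / (r * (f r + r ^ 2 * g r)) * (if i = j then 1 else 0)) * r ^ 2
          + 2 * (f' / (r * f r)) * x i * x j)) := by
    rw [← EuclideanSpace.sum_mul_christoffel_form, Finset.mul_sum]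
    exact Finset.sum_congr rfl fun k _ => by ring
  have hf : f r ≠ 0 := hfne
  have hfg : f r + r ^ 2 * g r ≠ 0 := hfgne
  rw [hderiv, hsum]
  field_simp
  ring

/-- Covariant derivative of `b_i = h(|x|) x_i` with respect to the Levi-Civita
connection of `a_{ij} = f(r) δ_{ij} + g(r) x_i x_j`:
`b_{i;j} = ½ (h(rf'+2f)/(f+r²g)) δ_{ij} + (h'/r − ½ h(r²g'+2f')/(r(f+r²g))) x_i x_j`. -/
theorem covariant_derivative_spherical_one_form
    (n : ℕ) (hn : 1 ≤ n) (f g h : ℝ → ℝ)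
    (hfd : ∀ r > (0:ℝ), DifferentiableAt ℝ f r)
    (hgd : ∀ r > (0:ℝ), DifferentiableAt ℝ g r)
    (hhd : ∀ r > (0:ℝ), DifferentiableAt ℝ h r)
    (x : EuclideanSpace ℝ (Fin n)) (hx : x ≠ 0)
    (hfne : f ‖x‖ ≠ 0) (hfgne : f ‖x‖ + ‖x‖ ^ 2 * g ‖x‖ ≠ 0) :
    let r : ℝ := ‖x‖
    let f' : ℝ := deriv f r
    let g' : ℝ := deriv g r
    let h' : ℝ := deriv h r
    let Γ : Fin n → Fin n → Fin n → ℝ := fun k i j =>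
      (1 / 2) *
        ((f r * g' - 2 * f' * g r) / (r * f r * (f r + r ^ 2 * g r)) * x i * x j * x k
          + (2 * r * g r - f') / (r * (f r + r ^ 2 * g r)) * x k
              * (if i = j then (1:ℝ) else 0)
          + f' / (r * f r) * (x i * (if k = j then (1:ℝ) else 0)
              + x j * (if k = i then (1:ℝ) else 0)))
    ∀ i j : Fin n,
      deriv (fun t : ℝ => h ‖x + t • EuclideanSpace.single j (1:ℝ)‖
          * (x + t • EuclideanSpace.single j (1:ℝ)) i) 0
        - ∑ k, (h r * x k) * Γ k i j
      = (1 / 2) * (h r * (r * f' + 2 * f r) / (f r + r ^ 2 * g r))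
            * (if i = j then (1:ℝ) else 0)
        + (h' / r - (1 / 2) * (h r * (r ^ 2 * g' + 2 * f') / (r * (f r + r ^ 2 * g r))))
            * x i * x j :=
  covariant_derivative_spherical_one_form_general n f g h hhd x hx hfne hfgne
end

section
/- Let n ≥ 2, let r > 0, let φ : [−r, r] → (0,∞) be continuous, and fix x ∈ ℝⁿ with |x| = r. Then the Lebesgue measure of the set {y ∈ ℝⁿ : y ≠ 0 and |y|·φ(⟨x,y⟩/|y|) < 1} equals Vol(Bⁿ) · ( ∫₀^π (sin t)^{n−2}·φ(r·cos t)^{−n} dt ) / ( ∫₀^π (sin t)^{n−2} dt ), where Vol(Bⁿ) is the Lebesgue measure of the Euclidean unit ball in ℝⁿ, |·| is the Euclidean norm and ⟨·,·⟩ the Euclidean inner product. -/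
open scoped RealInnerProductSpace
open MeasureTheory

/-!
Split `ℝⁿ = ℝ e ⊕ e^⊥` with `e = x / r`. A function of `⟪e, y⟫` and `‖y‖` sees the
`e^⊥`-component only through its norm, so polar coordinates in `e^⊥` followed by polar coordinates
`(a, ρ) = (u cos t, u sin t)` in the half-plane `ρ > 0` give
`∫ H(⟪e, y⟫, ‖y‖) dy = c ∫₀^π ∫₀^∞ u^(n-1) sin^(n-2) t · H(u cos t, u) du dt`
with `c = (n - 1) · vol(B^(n-1))`. The `F`-unit ball is `{u < 1 / φ(r cos t)}`, so its
volume is `c ∫₀^π sin^(n-2) t · φ(r cos t)^(-n) dt / n`; the Euclidean unit ball is the case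
`φ ≡ 1`, and dividing the two formulas eliminates `c`.
-/

open Set Metric Real Module
open scoped ENNReal

section Radial

variable {E : Type*} [NormedAddCommGroup E] [NormedSpace ℝ E] [FiniteDimensional ℝ E]
  [Nontrivial E] [MeasurableSpace E] [BorelSpace E] (μ : Measure E) [μ.IsAddHaarMeasure]

theorem lintegral_fun_norm_addHaar {f : ℝ → ℝ≥0∞} (hf : Measurable f) :
    ∫⁻ x, f ‖x‖ ∂μ = finrank ℝ E * μ (ball 0 1) *
      ∫⁻ ρ in Ioi (0 : ℝ), ENNReal.ofReal (ρ ^ (finrank ℝ E - 1)) * f ρ :=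
  calc
    ∫⁻ x, f ‖x‖ ∂μ = ∫⁻ x : ({(0)}ᶜ : Set E), f ‖x.1‖ ∂(μ.comap (↑)) := by
      rw [lintegral_subtype_comap (measurableSet_singleton _).compl (fun x => f ‖x‖),
        restrict_compl_singleton]
    _ = ∫⁻ x, f x.2 ∂μ.toSphere.prod (.volumeIoiPow (finrank ℝ E - 1)) := by
      simpa using μ.measurePreserving_homeomorphUnitSphereProd.lintegral_comp_emb
        (Homeomorph.measurableEmbedding _) (f ∘ Subtype.val ∘ Prod.snd)
    _ = μ.toSphere univ * ∫⁻ x : Ioi (0 : ℝ), f x ∂.volumeIoiPow (finrank ℝ E - 1) := by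
      rw [lintegral_prod _ (by fun_prop)]
      simp only [lintegral_const, mul_comm]
    _ = _ := by
      rw [Measure.toSphere_apply_univ, Measure.volumeIoiPow,
        lintegral_withDensity_eq_lintegral_mul _ (by fun_prop) (by fun_prop),
        ← lintegral_subtype_comap measurableSet_Ioi (fun ρ => ENNReal.ofReal (ρ ^ _) * f ρ)]
      rfl

theorem lintegral_prod_fun_norm_addHaar {h : ℝ × ℝ → ℝ≥0∞} (hh : Measurable h) :
    ∫⁻ p, h (p.1, ‖p.2‖) ∂(volume.prod μ) = finrank ℝ E * μ (ball 0 1) *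
      ∫⁻ q in univ ×ˢ Ioi 0, ENNReal.ofReal (q.2 ^ (finrank ℝ E - 1)) * h q := by
  rw [lintegral_prod _ (by fun_prop), Measure.volume_eq_prod, ← Measure.prod_restrict,
    lintegral_prod _ (by fun_prop), Measure.restrict_univ,
    ← lintegral_const_mul' _ _ (ENNReal.mul_ne_top (by simp) measure_ball_lt_top.ne)]
  exact lintegral_congr fun a => lintegral_fun_norm_addHaar μ (f := fun ρ => h (a, ρ)) (by fun_prop)

end Radial

theorem polarCoord_symm_mem_upperHalfPlane_iff {q : ℝ × ℝ} (hq : q ∈ polarCoord.target) :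
    polarCoord.symm q ∈ univ ×ˢ Ioi (0 : ℝ) ↔ q ∈ Ioi 0 ×ˢ Ioo 0 π := by
  obtain ⟨hu, ht⟩ := hq
  simp only [polarCoord_symm_apply, mem_prod, mem_univ, mem_Ioi, true_and, mem_Ioo] at hu ht ⊢
  rw [mul_pos_iff_of_pos_left hu]
  refine ⟨fun hs => ⟨hu, ?_, ht.2⟩, fun h => sin_pos_of_pos_of_lt_pi h.2.1 h.2.2⟩
  by_contra! h
  exact hs.not_ge (sin_nonpos_of_nonpos_of_neg_pi_le h ht.1.le)

theorem lintegral_upperHalfPlane_eq_polar (f : ℝ × ℝ → ℝ≥0∞) :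
    ∫⁻ p in univ ×ˢ Ioi 0, f p =
      ∫⁻ q in Ioi 0 ×ˢ Ioo 0 π, ENNReal.ofReal q.1 * f (q.1 * cos q.2, q.1 * sin q.2) := by
  have hs : Ioi 0 ×ˢ Ioo 0 π ⊆ polarCoord.target :=
    prod_mono_right (Ioo_subset_Ioo_left (neg_nonpos.2 pi_pos.le))
  rw [← lintegral_indicator (MeasurableSet.univ.prod measurableSet_Ioi),
    ← lintegral_comp_polarCoord_symm, ← Measure.restrict_restrict_of_subset hs,
    ← lintegral_indicator (measurableSet_Ioi.prod measurableSet_Ioo)]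
  refine setLIntegral_congr_fun polarCoord.open_target.measurableSet fun q hq => ?_
  by_cases h : q ∈ Ioi 0 ×ˢ Ioo 0 π
  · rw [indicator_of_mem ((polarCoord_symm_mem_upperHalfPlane_iff hq).2 h), indicator_of_mem h,
      polarCoord_symm_apply, smul_eq_mul]
  · rw [indicator_of_notMem (mt (polarCoord_symm_mem_upperHalfPlane_iff hq).1 h),
      indicator_of_notMem h, smul_zero]

theorem setLIntegral_Ioo_zero_pow (m : ℕ) {R : ℝ} (hR : 0 ≤ R) :
    ∫⁻ u in Ioo 0 R, ENNReal.ofReal (u ^ m) = ENNReal.ofReal (R ^ (m + 1) / (m + 1)) := by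
  rw [← ofReal_integral_eq_lintegral_ofReal, ← integral_Ioc_eq_integral_Ioo,
    ← intervalIntegral.integral_of_le hR, integral_pow]
  · simp
  · exact (intervalIntegral.intervalIntegrable_pow m).1.mono_set Ioo_subset_Ioc_self
  · filter_upwards [ae_restrict_mem measurableSet_Ioo] with u hu using pow_nonneg hu.1.le m

theorem lintegral_polar_subgraph (k m : ℕ) {ρ : ℝ → ℝ} (hρ : Continuous ρ)
    (hρ_nonneg : ∀ t, 0 ≤ ρ t) :
    ∫⁻ q in Ioi 0 ×ˢ Ioo 0 π,
        ENNReal.ofReal (q.1 ^ m * sin q.2 ^ k) * {q : ℝ × ℝ | q.1 < ρ q.2}.indicator 1 q =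
      ENNReal.ofReal ((∫ t in 0..π, sin t ^ k * ρ t ^ (m + 1)) / (m + 1)) := by
  have hslice (t : ℝ) : ∫⁻ u in Ioi 0, ENNReal.ofReal (u ^ m * sin t ^ k) *
      {q : ℝ × ℝ | q.1 < ρ q.2}.indicator 1 (u, t) =
        ENNReal.ofReal (sin t ^ k * ρ t ^ (m + 1) / (m + 1)) :=
    calc _ = ∫⁻ u in Ioo 0 (ρ t), ENNReal.ofReal (u ^ m) * ENNReal.ofReal (sin t ^ k) := by
          rw [← Iio_inter_Ioi, ← Measure.restrict_restrict measurableSet_Iio,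
            ← lintegral_indicator measurableSet_Iio]
          refine setLIntegral_congr_fun measurableSet_Ioi fun u (hu : 0 < u) => ?_
          by_cases h : u < ρ t
          · simp [h, ENNReal.ofReal_mul (pow_nonneg hu.le m)]
          · simp [h]
      _ = _ := by
          rw [lintegral_mul_const _ (by fun_prop), setLIntegral_Ioo_zero_pow m (hρ_nonneg t),
            ← ENNReal.ofReal_mul (by have := hρ_nonneg t; positivity)]
          ring_nf
  have hmeas : Measurable fun q : ℝ × ℝ =>
      ENNReal.ofReal (q.1 ^ m * sin q.2 ^ k) * {q : ℝ × ℝ | q.1 < ρ q.2}.indicator 1 q :=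
    (by fun_prop : Measurable _).mul <| measurable_one.indicator <|
      measurableSet_lt measurable_fst (hρ.measurable.comp measurable_snd)
  have hint : IntegrableOn (fun t => sin t ^ k * ρ t ^ (m + 1) / (m + 1)) (Ioo 0 π) :=
    (by fun_prop : Continuous _).integrableOn_Icc.mono_set Ioo_subset_Icc_self
  rw [Measure.volume_eq_prod, ← Measure.prod_restrict, lintegral_prod_symm _ hmeas.aemeasurable]
  simp_rw [hslice]
  rw [← ofReal_integral_eq_lintegral_ofReal hint]
  · rw [← integral_Ioc_eq_integral_Ioo, ← intervalIntegral.integral_of_le pi_pos.le,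
      intervalIntegral.integral_div]
  · filter_upwards [ae_restrict_mem measurableSet_Ioo] with t ht
    have := sin_pos_of_pos_of_lt_pi ht.1 ht.2
    have := hρ_nonneg t
    positivity

section Zonal

variable {E : Type*} [NormedAddCommGroup E] [InnerProductSpace ℝ E] {e : E}

theorem norm_sq_eq_inner_sq_add_norm_sq_orthogonalProjectionOnto (he : ‖e‖ = 1) (y : E) :
    ‖y‖ ^ 2 = ⟪e, y⟫ ^ 2 + ‖(ℝ ∙ e)ᗮ.orthogonalProjectionOnto y‖ ^ 2 := by
  have hproj : ((ℝ ∙ e).orthogonalProjectionOnto y : E) = ⟪e, y⟫ • e :=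
    Submodule.starProjection_unit_singleton ℝ he y
  have hnorm : ‖(ℝ ∙ e).orthogonalProjectionOnto y‖ = |⟪e, y⟫| := by
    rw [Submodule.coe_norm, hproj, norm_smul, he, mul_one, norm_eq_abs]
  rw [(ℝ ∙ e).norm_sq_eq_add_norm_sq_projection y, hnorm, sq_abs]

/-- For `e = x / ‖x‖` and `g s = φ (‖x‖ * s)` this is the unit ball `{y | F(x, y) < 1}` of the
spherically symmetric Finsler metric `F(x, y) = ‖y‖ φ(⟪x, y⟫ / ‖y‖)`. -/
def zonalUnitBall (e : E) (g : ℝ → ℝ) : Set E :=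
  {y | y ≠ 0 ∧ ‖y‖ * g (⟪e, y⟫ / ‖y‖) < 1}

variable [FiniteDimensional ℝ E] [MeasurableSpace E] [BorelSpace E]

theorem measurePreserving_inner_orthogonalProjectionOnto (he : ‖e‖ = 1) :
    MeasurePreserving (fun y : E => (⟪e, y⟫, (ℝ ∙ e)ᗮ.orthogonalProjectionOnto y)) := by
  let L : E ≃ₗᵢ[ℝ] WithLp 2 (ℝ × (ℝ ∙ e)ᗮ) := (ℝ ∙ e).orthogonalDecomposition.trans
    ((LinearIsometryEquiv.toSpanUnitSingleton e he).symm.withLpProdCongr 2 (.refl ℝ _))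
  convert (WithLp.volume_preserving_ofLp ℝ (ℝ ∙ e)ᗮ).comp L.measurePreserving using 1
  ext y : 1
  refine Prod.ext ?_ (by simp [L])
  apply (LinearIsometryEquiv.toSpanUnitSingleton e he).injective
  ext1
  simp [L, Submodule.starProjection_unit_singleton ℝ he]

theorem lintegral_inner_norm_eq_polar (hE : 2 ≤ finrank ℝ E) (he : ‖e‖ = 1)
    {H : ℝ × ℝ → ℝ≥0∞} (hH : Measurable H) :
    ∫⁻ y, H (⟪e, y⟫, ‖y‖) =
      finrank ℝ (ℝ ∙ e)ᗮ * volume (ball (0 : (ℝ ∙ e)ᗮ) 1) *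
        ∫⁻ q in Ioi 0 ×ˢ Ioo 0 π,
          ENNReal.ofReal (q.1 ^ (finrank ℝ E - 1) * sin q.2 ^ (finrank ℝ E - 2)) *
            H (q.1 * cos q.2, q.1) := by
  have hF : finrank ℝ (ℝ ∙ e)ᗮ = finrank ℝ E - 1 := by
    have := (ℝ ∙ e).finrank_add_finrank_orthogonal
    rw [finrank_span_singleton (norm_ne_zero_iff.1 (he ▸ one_ne_zero))] at this
    omega
  have : Nontrivial (ℝ ∙ e)ᗮ := nontrivial_of_finrank_pos (by rw [hF]; omega)
  calc ∫⁻ y, H (⟪e, y⟫, ‖y‖)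
      = ∫⁻ y, (fun p : ℝ × (ℝ ∙ e)ᗮ => H (p.1, √(p.1 ^ 2 + ‖p.2‖ ^ 2)))
          (⟪e, y⟫, (ℝ ∙ e)ᗮ.orthogonalProjectionOnto y) := by
        simp_rw [← norm_sq_eq_inner_sq_add_norm_sq_orthogonalProjectionOnto he,
          sqrt_sq (norm_nonneg _)]
    _ = ∫⁻ p : ℝ × (ℝ ∙ e)ᗮ, H (p.1, √(p.1 ^ 2 + ‖p.2‖ ^ 2)) :=
        (measurePreserving_inner_orthogonalProjectionOnto he).lintegral_comp
          (f := fun p : ℝ × (ℝ ∙ e)ᗮ => H (p.1, √(p.1 ^ 2 + ‖p.2‖ ^ 2))) (by fun_prop)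
    _ = finrank ℝ (ℝ ∙ e)ᗮ * volume (ball (0 : (ℝ ∙ e)ᗮ) 1) *
        ∫⁻ q in univ ×ˢ Ioi 0, ENNReal.ofReal (q.2 ^ (finrank ℝ E - 2)) *
          H (q.1, √(q.1 ^ 2 + q.2 ^ 2)) := by
        rw [Measure.volume_eq_prod, lintegral_prod_fun_norm_addHaar volume
          (h := fun q => H (q.1, √(q.1 ^ 2 + q.2 ^ 2))) (by fun_prop), hF, Nat.sub_sub]
    _ = _ := by
        rw [lintegral_upperHalfPlane_eq_polar]
        congr 1
        refine setLIntegral_congr_fun (measurableSet_Ioi.prod measurableSet_Ioo) ?_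
        rintro ⟨u, t⟩ ⟨hu : 0 < u, -⟩
        have hnorm : √((u * cos t) ^ 2 + (u * sin t) ^ 2) = u := by
          rw [show (u * cos t) ^ 2 + (u * sin t) ^ 2 = u ^ 2 by
            linear_combination u ^ 2 * sin_sq_add_cos_sq t, sqrt_sq hu.le]
        have hpow : u ^ (finrank ℝ E - 1) = u * u ^ (finrank ℝ E - 2) := by
          rw [← pow_succ']
          congr 1
          omega
        dsimp only
        rw [hnorm, ← mul_assoc, ← ENNReal.ofReal_mul hu.le, hpow, mul_pow, mul_assoc]

theorem volume_zonalUnitBall_eq (hE : 2 ≤ finrank ℝ E) (he : ‖e‖ = 1) {g : ℝ → ℝ}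
    (hg : Continuous g) (hg_pos : ∀ s ∈ Icc (-1) 1, 0 < g s) :
    volume (zonalUnitBall e g) =
      finrank ℝ (ℝ ∙ e)ᗮ * volume (ball (0 : (ℝ ∙ e)ᗮ) 1) *
        ENNReal.ofReal
          ((∫ t in 0..π, sin t ^ (finrank ℝ E - 2) / g (cos t) ^ finrank ℝ E) / finrank ℝ E) := by
  set S : Set (ℝ × ℝ) := {q | q.2 ≠ 0 ∧ q.2 * g (q.1 / q.2) < 1}
  have hS : MeasurableSet S :=
    (measurable_snd (measurableSet_singleton 0).compl).inter
      (measurableSet_lt (f := fun q : ℝ × ℝ => q.2 * g (q.1 / q.2))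
        (by have := hg.measurable; fun_prop) measurable_const)
  have hpreim : zonalUnitBall e g = (fun y => (⟪e, y⟫, ‖y‖)) ⁻¹' S := by
    ext y
    simp [zonalUnitBall, S]
  have hpolar : ∀ q ∈ Ioi 0 ×ˢ Ioo 0 π, S.indicator 1 (q.1 * cos q.2, q.1) =
      {q : ℝ × ℝ | q.1 < 1 / g (cos q.2)}.indicator (1 : ℝ × ℝ → ℝ≥0∞) q := by
    rintro ⟨u, t⟩ ⟨hu : 0 < u, -⟩
    have hmem : (u * cos t, u) ∈ S ↔ u < 1 / g (cos t) := by
      rw [lt_div_iff₀ (hg_pos _ (cos_mem_Icc t))]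
      simp [S, hu.ne', mul_div_cancel_left₀]
    simp only [indicator, hmem, mem_ofPred_eq, Pi.one_apply]
  have hn : finrank ℝ E - 1 + 1 = finrank ℝ E := by omega
  calc volume (zonalUnitBall e g)
      = ∫⁻ y, S.indicator 1 (⟪e, y⟫, ‖y‖) := by
        rw [hpreim, ← lintegral_indicator_one (hS.preimage (by fun_prop))]
        rfl
    _ = _ := lintegral_inner_norm_eq_polar hE he (measurable_one.indicator hS)
    _ = _ := by
        rw [setLIntegral_congr_fun (measurableSet_Ioi.prod measurableSet_Ioo)
            fun q hq => by rw [hpolar q hq],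
          lintegral_polar_subgraph _ _ (ρ := fun t => 1 / g (cos t))
            (continuous_const.div (hg.comp continuous_cos) fun t => (hg_pos _ (cos_mem_Icc t)).ne')
            fun t => (one_div_pos.2 (hg_pos _ (cos_mem_Icc t))).le,
          hn, ← Nat.cast_add_one, hn]
        simp_rw [one_div_pow, mul_one_div]

theorem volume_ball_eq_mul_integral_sin_pow (hE : 2 ≤ finrank ℝ E) (he : ‖e‖ = 1) :
    volume (ball (0 : E) 1) =
      finrank ℝ (ℝ ∙ e)ᗮ * volume (ball (0 : (ℝ ∙ e)ᗮ) 1) *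
        ENNReal.ofReal ((∫ t in 0..π, sin t ^ (finrank ℝ E - 2)) / finrank ℝ E) := by
  have : Nontrivial E := nontrivial_of_finrank_pos (R := ℝ) (by omega)
  have hball : zonalUnitBall e (fun _ => 1) = ball 0 1 \ {0} := by
    ext y
    simp [zonalUnitBall, and_comm]
  rw [← measure_sdiff_null (measure_singleton (0 : E)), ← hball,
    volume_zonalUnitBall_eq hE he continuous_const fun _ _ => one_pos]
  simp

theorem volume_zonalUnitBall_eq_volume_ball_mul (hE : 2 ≤ finrank ℝ E) (he : ‖e‖ = 1)
    {g : ℝ → ℝ} (hg : ContinuousOn g (Icc (-1) 1)) (hg_pos : ∀ s ∈ Icc (-1) 1, 0 < g s) :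
    volume (zonalUnitBall e g) =
      volume (ball (0 : E) 1) * ENNReal.ofReal
        ((∫ t in 0..π, sin t ^ (finrank ℝ E - 2) / g (cos t) ^ finrank ℝ E) /
          ∫ t in 0..π, sin t ^ (finrank ℝ E - 2)) := by
  obtain ⟨g', hg'c, hg'_eq⟩ : ∃ g' : ℝ → ℝ, Continuous g' ∧ EqOn g' g (Icc (-1) 1) :=
    ⟨IccExtend (neg_le_self zero_le_one) ((Icc (-1 : ℝ) 1).domRestrict g),
      continuous_IccExtend_iff.2 hg.domRestrict, fun s hs => IccExtend_of_mem _ _ hs⟩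
  have hball : zonalUnitBall e g = zonalUnitBall e g' := by
    have hmem (y : E) : ⟪e, y⟫ / ‖y‖ ∈ Icc (-1) 1 := by
      simpa [he, abs_le] using abs_real_inner_div_norm_mul_norm_le_one e y
    simp_rw [zonalUnitBall, hg'_eq (hmem _)]
  have hint : ∫ t in 0..π, sin t ^ (finrank ℝ E - 2) / g (cos t) ^ finrank ℝ E =
      ∫ t in 0..π, sin t ^ (finrank ℝ E - 2) / g' (cos t) ^ finrank ℝ E := by
    simp_rw [hg'_eq (cos_mem_Icc _)]
  have hI : 0 < ∫ t in 0..π, sin t ^ (finrank ℝ E - 2) :=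
    intervalIntegral.intervalIntegral_pos_of_pos_on ((continuous_sin.pow _).intervalIntegrable _ _)
      (fun t ht => pow_pos (sin_pos_of_pos_of_lt_pi ht.1 ht.2) _) pi_pos
  rw [hball, hint, volume_zonalUnitBall_eq hE he hg'c fun s hs => hg'_eq hs ▸ hg_pos s hs,
    volume_ball_eq_mul_integral_sin_pow hE he, mul_assoc _ (ENNReal.ofReal _),
    ← ENNReal.ofReal_mul (div_nonneg hI.le (Nat.cast_nonneg _))]
  congr 2
  field_simp

end Zonal

theorem exists_norm_eq_one_and_eq_norm_smul {E : Type*} [NormedAddCommGroup E] [NormedSpace ℝ E]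
    [Nontrivial E] (x : E) : ∃ e : E, ‖e‖ = 1 ∧ x = ‖x‖ • e := by
  rcases eq_or_ne x 0 with rfl | hx
  · obtain ⟨e, he⟩ := exists_norm_eq E zero_le_one
    exact ⟨e, he, by simp⟩
  · exact ⟨‖x‖⁻¹ • x, norm_smul_inv_norm hx, (smul_inv_smul₀ (norm_ne_zero_iff.2 hx) x).symm⟩

theorem busemann_hausdorff_unit_ball_volume_general
    (n : ℕ) (hn : 2 ≤ n) (r : ℝ)
    (φ : ℝ → ℝ)
    (hφ_cont : ContinuousOn φ (Set.Icc (-r) r))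
    (hφ_pos : ∀ s ∈ Set.Icc (-r) r, 0 < φ s)
    (x : EuclideanSpace ℝ (Fin n)) (hx : ‖x‖ = r) :
    volume {y : EuclideanSpace ℝ (Fin n) | y ≠ 0 ∧ ‖y‖ * φ (⟪x, y⟫ / ‖y‖) < 1}
      = volume (Metric.ball (0 : EuclideanSpace ℝ (Fin n)) 1)
        * ENNReal.ofReal
          ((∫ t in (0:ℝ)..Real.pi, Real.sin t ^ (n - 2) / φ (r * Real.cos t) ^ n)
            / ∫ t in (0:ℝ)..Real.pi, Real.sin t ^ (n - 2)) := by
  have hE : 2 ≤ finrank ℝ (EuclideanSpace ℝ (Fin n)) := by rwa [finrank_euclideanSpace_fin]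
  have : Nontrivial (EuclideanSpace ℝ (Fin n)) := nontrivial_of_finrank_pos (R := ℝ) (by omega)
  obtain ⟨e, he, hxe⟩ := exists_norm_eq_one_and_eq_norm_smul x
  rw [hx] at hxe
  subst hxe
  have hr : 0 ≤ r := hx ▸ norm_nonneg _
  have hmaps : MapsTo (r * ·) (Icc (-1) 1) (Icc (-r) r) := fun s hs =>
    ⟨by nlinarith [hs.1], by nlinarith [hs.2]⟩
  have key := volume_zonalUnitBall_eq_volume_ball_mul hE he (g := fun s => φ (r * s))
    (hφ_cont.comp (continuous_const_mul r).continuousOn hmaps) fun s hs => hφ_pos _ (hmaps hs)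
  rw [finrank_euclideanSpace_fin] at key
  convert key using 3
  simp [zonalUnitBall, real_inner_smul_left, mul_div_assoc]

/-- Busemann–Hausdorff part of Lemma 2.2: the volume of the unit ball of the
spherically symmetric Finsler norm `y ↦ |y| φ(⟨x,y⟩/|y|)` at a point `x` with
`|x| = r` equals `Vol(Bⁿ) · (∫₀^π sin^{n−2}t · φ(r cos t)^{−n} dt)/(∫₀^π sin^{n−2}t dt)`. -/
theorem busemann_hausdorff_unit_ball_volume
    (n : ℕ) (hn : 2 ≤ n) (r : ℝ) (hr : 0 < r)
    (φ : ℝ → ℝ)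
    (hφ_cont : ContinuousOn φ (Set.Icc (-r) r))
    (hφ_pos : ∀ s ∈ Set.Icc (-r) r, 0 < φ s)
    (x : EuclideanSpace ℝ (Fin n)) (hx : ‖x‖ = r) :
    volume {y : EuclideanSpace ℝ (Fin n) | y ≠ 0 ∧ ‖y‖ * φ (⟪x, y⟫ / ‖y‖) < 1}
      = volume (Metric.ball (0 : EuclideanSpace ℝ (Fin n)) 1)
        * ENNReal.ofReal
          ((∫ t in (0:ℝ)..Real.pi, Real.sin t ^ (n - 2) / φ (r * Real.cos t) ^ n)
            / ∫ t in (0:ℝ)..Real.pi, Real.sin t ^ (n - 2)) :=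
  busemann_hausdorff_unit_ball_volume_general n hn r φ hφ_cont hφ_pos x hx
end
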